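/- Let K ⊆ ℂ be a number field with K ⊄ ℝ. If K is not a CM-field, then there exists a unit u ∈ O_K^× such that u^n ∉ ℝ for every nonzero integer n. -/

import Mathlib

/-!
Let `F = f⁻¹(ℝ)`, a proper subfield of `K`. If every unit of `K` had a nonzero power with real
image, every unit of `K` would have a power in `𝓞 F`, so the unit rank of `K` would not exceed
that of `F`: `r₁ + r₂ ≤ s₁ + s₂` for the signatures `(r₁, r₂)` of `K` and `(s₁, s₂)` of `F`.
On the other hand `r₁ + 2 r₂ = [K : F] (s₁ + 2 s₂) ≥ 2 (s₁ + 2 s₂)`. Together these force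
`r₁ = s₂ = 0` and `[K : F] = 2`, so `K` would be a CM-field.
-/

noncomputable section

open NumberField IsDedekindDomain
open scoped Multiplicative

variable (K : Type*) [Field K] [NumberField K]

/-- The places in `S`: all the infinite places of `K` together with the
finite places lying in a finite set `S₀`. -/
abbrev SPlace (S₀ : Finset (HeightOneSpectrum (𝓞 K))) : Type _ :=
  InfinitePlace K ⊕ {v // v ∈ S₀}

variable (S₀ : Finset (HeightOneSpectrum (𝓞 K)))

/-- The completion of `K` at a place of `S`. -/
def SComp : SPlace K S₀ → Type _
  | .inl w => w.1.Completion
  | .inr v => v.1.adicCompletion K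

instance : ∀ p : SPlace K S₀, CommRing (SComp K S₀ p)
  | .inl w => inferInstanceAs (CommRing w.1.Completion)
  | .inr v => inferInstanceAs (CommRing (v.1.adicCompletion K))

instance : ∀ p : SPlace K S₀, TopologicalSpace (SComp K S₀ p)
  | .inl w => inferInstanceAs (TopologicalSpace w.1.Completion)
  | .inr v => inferInstanceAs (TopologicalSpace (v.1.adicCompletion K))

instance : ∀ p : SPlace K S₀, IsTopologicalRing (SComp K S₀ p)
  | .inl w => inferInstanceAs (IsTopologicalRing w.1.Completion)
  | .inr v => inferInstanceAs (IsTopologicalRing (v.1.adicCompletion K))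

/-- The diagonal embedding of `K` into the product of its completions at places of `S`. -/
def SDiag : K →+* ∀ p : SPlace K S₀, SComp K S₀ p :=
  Pi.ringHom fun p => match p with
    | .inl w => algebraMap K w.1.Completion
    | .inr v => algebraMap K (v.1.adicCompletion K)

/-- The normalized absolute value at a place of `S`, extended to the completion.
At a real place it is the usual absolute value, at a complex place the square of
the modulus, and at a finite place `v` it is `(Nv)^(-v(x))`. -/
def SAbs : ∀ p : SPlace K S₀, SComp K S₀ p → ℝ
  | .inl w => fun x : w.1.Completion => ‖x‖ ^ w.mult
  | .inr v => fun x : v.1.adicCompletion K =>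
      if h : (Valued.v x : WithZero (Multiplicative ℤ)) = 0 then 0
      else (Nat.card (𝓞 K ⧸ v.1.asIdeal) : ℝ) ^ (Multiplicative.toAdd (WithZero.unzero h))

/-- The `S`-norm on the product of the completions. -/
def SNorm (ξ : ∀ p : SPlace K S₀, SComp K S₀ p) : ℝ :=
  ∏ p : SPlace K S₀, SAbs K S₀ p (ξ p)

/-- The ring of `S`-integers of `K`. -/
def SInt : Subring K where
  carrier := {x | ∀ v : HeightOneSpectrum (𝓞 K), v ∉ S₀ → v.valuation K x ≤ 1}
  one_mem' := fun v _ => le_of_eq (map_one _)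
  mul_mem' := fun ha hb v hv => by
    rw [Set.mem_setOf_eq] at *
    rw [map_mul]; exact mul_le_one' (ha v hv) (hb v hv)
  zero_mem' := fun v _ => by simp
  add_mem' := fun ha hb v hv => le_trans (Valuation.map_add _ _ _) (max_le (ha v hv) (hb v hv))
  neg_mem' := fun ha v hv => by
    rw [Set.mem_setOf_eq] at *
    rw [Valuation.map_neg]; exact ha v hv

/-- The `S`-norm of a nonzero ideal of the `S`-integers: the cardinality of the quotient. -/
def SIdealNorm (a : Ideal (SInt K S₀)) : ℝ := (Nat.card (SInt K S₀ ⧸ a) : ℝ)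

/-- `m_a^S (ξ) = N_S(a)⁻¹ ⬝ inf_{γ ∈ a} N_S (ξ - γ)`. -/
def mS (a : Ideal (SInt K S₀)) (ξ : ∀ p : SPlace K S₀, SComp K S₀ p) : ℝ :=
  (SIdealNorm K S₀ a)⁻¹ * ⨅ γ : a, SNorm K S₀ (ξ - SDiag K S₀ ((γ : SInt K S₀) : K))

/-- The `S`-Euclidean minimum of the ideal `a`. -/
def MS (a : Ideal (SInt K S₀)) : ℝ := ⨆ ξ : K, mS K S₀ a (SDiag K S₀ ξ)

/-- The `S`-inhomogeneous minimum of the ideal `a`. -/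
def MbarS (a : Ideal (SInt K S₀)) : ℝ := ⨆ ξ : ∀ p : SPlace K S₀, SComp K S₀ p, mS K S₀ a ξ

/-- The ideal `a`, embedded diagonally as an additive subgroup of `K̄_S`. -/
def aSub (a : Ideal (SInt K S₀)) : AddSubgroup (∀ p : SPlace K S₀, SComp K S₀ p) :=
  AddSubgroup.map ((SDiag K S₀).comp (SInt K S₀).subtype).toAddMonoidHom a.toAddSubgroup

/-- The compact group `𝕋 = K̄_S / a`. -/
abbrev TS (a : Ideal (SInt K S₀)) : Type _ :=
  (∀ p : SPlace K S₀, SComp K S₀ p) ⧸ aSub K S₀ a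

/-- The inclusion of the completion at a place `w ∈ S` into `K̄_S`, sending `x` to the
vector which is `x` in the `w`-component and `0` elsewhere. -/
def singleAt (w : SPlace K S₀) (x : SComp K S₀ w) : ∀ p : SPlace K S₀, SComp K S₀ p :=
  letI := Classical.decEq (SPlace K S₀)
  Pi.single w x

/-- The orbit of the class of `ξ` in `𝕋` under the multiplication action of the `S`-units. -/
def SOrb (a : Ideal (SInt K S₀)) (ξ : ∀ p : SPlace K S₀, SComp K S₀ p) : Set (TS K S₀ a) :=
  {y | ∃ u : (SInt K S₀)ˣ, y = (QuotientAddGroup.mk (SDiag K S₀ ((u : SInt K S₀) : K) * ξ) : TS K S₀ a)}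

/-- `K` is a CM-field: `K` is totally complex and is a quadratic extension of a
totally real subfield. -/
def IsCMField : Prop :=
  (∀ w : InfinitePlace K, w.IsComplex) ∧
    ∃ F : IntermediateField ℚ K,
      (∀ φ : F →+* ℂ, ∀ x : F, ∃ r : ℝ, φ x = (r : ℂ)) ∧ Module.finrank F K = 2

/-- The maximal totally real subfield `K⁺` of `K`. -/
def maxTotallyReal : IntermediateField ℚ K :=
  sSup {F : IntermediateField ℚ K | ∀ φ : F →+* ℂ, ∀ x : F, ∃ r : ℝ, φ x = (r : ℂ)}

/-- A finite prime `v` of `K` splits in `K/K⁺` if some other prime of `K` has the same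
valuation ring on `K⁺`, i.e. lies over the same prime of `K⁺`. -/
def SplitsInQuadratic (v : HeightOneSpectrum (𝓞 K)) : Prop :=
  ∃ w : HeightOneSpectrum (𝓞 K), w ≠ v ∧
    ∀ x : maxTotallyReal K, (v.valuation K (x : K) ≤ 1 ↔ w.valuation K (x : K) ≤ 1)

/-- Multiplication by the `S`-unit `u` as a map `𝕋 → 𝕋`. -/
def TSmul (a : Ideal (SInt K S₀)) (u : (SInt K S₀)ˣ) : TS K S₀ a → TS K S₀ a :=
  QuotientAddGroup.map (aSub K S₀ a) (aSub K S₀ a)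
    (AddMonoidHom.mulLeft (SDiag K S₀ ((u : SInt K S₀) : K)))
    (by
      rintro x ⟨γ, hγ, rfl⟩
      exact ⟨(u : SInt K S₀) * γ, Ideal.mul_mem_left a _ (by simpa using hγ),
        by simp [map_mul]⟩)

/-- The set of points of `𝕋` where `m_a^S` attains the inhomogeneous minimum. -/
def minSet (a : Ideal (SInt K S₀)) : Set (TS K S₀ a) :=
  {t : TS K S₀ a | ∃ ξ, (QuotientAddGroup.mk ξ : TS K S₀ a) = t ∧ mS K S₀ a ξ = MbarS K S₀ a}

instance TSMeasurableSpace (a : Ideal (SInt K S₀)) : MeasurableSpace (TS K S₀ a) :=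
  borel _

theorem Module.finrank_le_of_forall_smul_mem_range {R M N : Type*} [CommRing R] [IsDomain R]
    [AddCommGroup M] [Module R M] [Module.Finite R M]
    [AddCommGroup N] [Module R N] [Module.Finite R N]
    (f : M →ₗ[R] N) (hf : ∀ y, ∃ a : R, a ≠ 0 ∧ a • y ∈ LinearMap.range f) :
    finrank R N ≤ finrank R M := by
  have hcoker : finrank R (N ⧸ LinearMap.range f) = 0 := by
    refine finrank_eq_zero_of_rank_eq_zero (rank_eq_zero_iff.mpr fun y ↦ ?_)
    obtain ⟨y, rfl⟩ := Submodule.mkQ_surjective _ y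
    obtain ⟨a, ha, hy⟩ := hf y
    refine ⟨a, ha, ?_⟩
    rwa [← map_smul, Submodule.mkQ_apply, Submodule.Quotient.mk_eq_zero]
  rw [← (LinearMap.range f).finrank_quotient_add_finrank, hcoker, zero_add]
  exact LinearMap.finrank_range_le f

namespace NumberField

open Module

theorem Units.rank_le_of_forall_zpow_mem_range {F K : Type*} [Field F] [NumberField F]
    [Field K] [NumberField K] (h : (𝓞 F)ˣ →* (𝓞 K)ˣ)
    (hpow : ∀ u, ∃ n : ℤ, n ≠ 0 ∧ u ^ n ∈ h.range) :
    Units.rank K ≤ Units.rank F := by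
  rw [← Units.finrank_eq, ← Units.finrank_eq]
  refine Module.finrank_le_of_forall_smul_mem_range h.toAdditive.toIntLinearMap fun u ↦ ?_
  obtain ⟨n, hn, v, hv⟩ := hpow u.toMul
  exact ⟨n, hn, .ofMul v, congrArg Additive.ofMul hv⟩

theorem Units.mem_range_map_of_coe_mem {F K : Type*} [Field F] [NumberField F]
    [Field K] [NumberField K] [Algebra F K] (u : (𝓞 K)ˣ)
    (hu : ((u : 𝓞 K) : K) ∈ (algebraMap F K).range) :
    u ∈ (Units.map (algebraMap (𝓞 F) (𝓞 K)).toMonoidHom).range := by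
  obtain ⟨x, hx⟩ := hu
  have hint : IsIntegral ℤ x := by
    rw [← isIntegral_algebraMap_iff (algebraMap F K).injective, hx]
    exact (u : 𝓞 K).isIntegral_coe
  have hy : algebraMap (𝓞 F) (𝓞 K) ⟨x, hint⟩ = u := RingOfIntegers.ext hx
  have hunit : IsUnit (⟨x, hint⟩ : 𝓞 F) :=
    IsUnit.of_map (algebraMap (𝓞 F) (𝓞 K)) _ (hy ▸ u.isUnit)
  exact ⟨hunit.unit, Units.ext hy⟩

theorem IsTotallyReal.exists_ofReal_eq {F : Type*} [Field F] [IsTotallyReal F]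
    (φ : F →+* ℂ) (x : F) : ∃ r : ℝ, φ x = r :=
  ⟨_, ((IsTotallyReal.complexEmbedding_isReal φ).coe_embedding_apply x).symm⟩

open InfinitePlace in
theorem isTotallyComplex_and_isTotallyReal_of_units_rank_le {F K : Type*} [Field F]
    [NumberField F] [Field K] [NumberField K] [Algebra F K]
    (hFK : 1 < finrank F K) (hrank : Units.rank K ≤ Units.rank F) :
    IsTotallyComplex K ∧ IsTotallyReal F ∧ finrank F K = 2 := by
  have hdeg : finrank ℚ F * 2 ≤ finrank ℚ K := by
    rw [← finrank_mul_finrank ℚ F K]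
    exact Nat.mul_le_mul_left _ hFK
  have hK := card_add_two_mul_card_eq_rank K
  have hF := card_add_two_mul_card_eq_rank F
  have hcardK := card_eq_nrRealPlaces_add_nrComplexPlaces (K := K)
  have hcardF := card_eq_nrRealPlaces_add_nrComplexPlaces (K := F)
  have hposK : 0 < Fintype.card (InfinitePlace K) := Fintype.card_pos
  have hposF : 0 < Fintype.card (InfinitePlace F) := Fintype.card_pos
  rw [Units.rank, Units.rank] at hrank
  refine ⟨nrRealPlaces_eq_zero_iff.mp (by omega), nrComplexPlaces_eq_zero_iff.mp (by omega), ?_⟩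
  refine Nat.eq_of_mul_eq_mul_left (finrank_pos (R := ℚ) (M := F)) ?_
  rw [finrank_mul_finrank ℚ F K]
  omega

end NumberField

def realSubfield {L : Type*} [Field L] [CharZero L] (f : L →+* ℂ) : IntermediateField ℚ L :=
  Complex.ofRealHom.toRatAlgHom.fieldRange.comap f.toRatAlgHom

theorem mem_realSubfield {L : Type*} [Field L] [CharZero L] (f : L →+* ℂ) (x : L) :
    x ∈ realSubfield f ↔ f x ∈ Set.range ((↑) : ℝ → ℂ) := Iff.rfl

/-- Let `K ⊆ ℂ` be a number field with `K ⊄ ℝ`.  If `K` is not a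
CM-field, then there is a unit `u` of `O_K` with `u^n ∉ ℝ` for every nonzero integer `n`. -/
theorem exists_unit_powers_not_real
    (f : K →+* ℂ) (hKR : ∃ x : K, f x ∉ Set.range ((↑) : ℝ → ℂ))
    (hCM : ¬ _root_.IsCMField K) :
    ∃ u : (𝓞 K)ˣ, ∀ n : ℤ, n ≠ 0 →
      (f ((u : 𝓞 K) : K)) ^ n ∉ Set.range ((↑) : ℝ → ℂ) := by
  by_contra! hpow
  set F := realSubfield f
  have hunits : ∀ u : (𝓞 K)ˣ, ∃ n : ℤ, n ≠ 0 ∧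
      u ^ n ∈ (Units.map (algebraMap (𝓞 F) (𝓞 K)).toMonoidHom).range := by
    intro u
    obtain ⟨n, hn, hreal⟩ := hpow u
    have hmem : (((u ^ n : (𝓞 K)ˣ) : 𝓞 K) : K) ∈ F := by
      rwa [mem_realSubfield, Units.coe_coe, Units.coe_zpow, map_zpow₀]
    exact ⟨n, hn, Units.mem_range_map_of_coe_mem _ ⟨⟨_, hmem⟩, rfl⟩⟩
  have hFK : 1 < Module.finrank F K := by
    obtain ⟨x, hx⟩ := hKR
    have hF : F ≠ ⊤ := fun h ↦ hx (show x ∈ F from h ▸ IntermediateField.mem_top)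
    have := IntermediateField.finrank_eq_one_iff_eq_top.not.mpr hF
    have := Module.finrank_pos (R := F) (M := K)
    omega
  obtain ⟨hK, hF, hdeg⟩ := isTotallyComplex_and_isTotallyReal_of_units_rank_le hFK
    (Units.rank_le_of_forall_zpow_mem_range _ hunits)
  exact hCM ⟨hK.isComplex, F, hF.exists_ofReal_eq, hdeg⟩
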